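/- arXiv:2410.22933 — 3 statements merged into one kernel-verified Lean document; each statement's English description precedes it below -/
import Mathlib

section
/- Every co-learnable countable family of pairwise nonisomorphic structures is nUs-learnable: if some learner co-learns K = (A_i)_{i∈ℕ}, then some learner nUs-learns K. -/
/-- A structure on domain ℕ: a binary relation given as a map to `Bool`. -/
abbrev Struc := ℕ → ℕ → Bool

/-- The restrictions of `R` and `R'` to `{0,…,s} × {0,…,s}` agree. -/
def restrEq (R R' : Struc) (s : ℕ) : Prop :=
  ∀ x ≤ s, ∀ y ≤ s, R x y = R' x y

/-- `R` and `R'` are isomorphic structures. -/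
def Isom (R R' : Struc) : Prop :=
  ∃ e : ℕ ≃ ℕ, ∀ x y, R' (e x) (e y) = R x y

/-- `R↾s` embeds into `R'`: there is a map injective on `{0,…,s}` preserving the relation. -/
def EmbedsRestr (R : Struc) (s : ℕ) (R' : Struc) : Prop :=
  ∃ h : ℕ → ℕ, (∀ x ≤ s, ∀ y ≤ s, h x = h y → x = y) ∧
    (∀ x ≤ s, ∀ y ≤ s, R' (h x) (h y) = R x y)

/-- The learning domain of a family: all isomorphic copies of members of the family. -/
def LD {I : Type} (A : I → Struc) : Set Struc := {R | ∃ i, Isom R (A i)}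

/-- A learner: its conjecture at stage `s` depends only on `R↾s`. -/
def IsLearner {I : Type} (M : Struc → ℕ → Option I) : Prop :=
  ∀ R R' s, restrEq R R' s → M R s = M R' s

/-- `M` Ex-learns the family `A`. -/
def ExLearns {I : Type} (A : I → Struc) (M : Struc → ℕ → Option I) : Prop :=
  ∀ R i, Isom R (A i) → ∃ s₀, ∀ s ≥ s₀, M R s = some i

/-- `M` Fin-learns the family `A`. -/
def FinLearns {I : Type} (A : I → Struc) (M : Struc → ℕ → Option I) : Prop :=
  ∀ R i, Isom R (A i) →
    ∃ s₀, (∀ s < s₀, M R s = none) ∧ (∀ s ≥ s₀, M R s = some i)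

/-- `M` co-learns the family `A`. -/
def CoLearns {I : Type} (A : I → Struc) (M : Struc → ℕ → Option I) : Prop :=
  ∀ R i, Isom R (A i) → ∀ j, (∃ s, M R s = some j) ↔ j ≠ i

/-- `M` nUs-learns the family `A`: it Ex-learns it and never abandons the correct conjecture. -/
def NUsLearns {I : Type} (A : I → Struc) (M : Struc → ℕ → Option I) : Prop :=
  ExLearns A M ∧
    ∀ R i, Isom R (A i) → ∀ s, M R s = some i → ∀ t ≥ s, M R t = some i

/-- `M` Dec-learns the family `A`: it Ex-learns it and never repeats an abandoned conjecture. -/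
def DecLearns {I : Type} (A : I → Struc) (M : Struc → ℕ → Option I) : Prop :=
  ExLearns A M ∧
    ∀ R ∈ LD A, ∀ (j : I) (s : ℕ), M R s = some j → M R (s + 1) ≠ some j →
      ∀ t > s, M R t ≠ some j

/-- `M` PL-learns the family `A`: the unique conjecture output infinitely often is correct. -/
def PLLearns {I : Type} (A : I → Struc) (M : Struc → ℕ → Option I) : Prop :=
  ∀ R ∈ LD A, ∀ i, {s | M R s = some i}.Infinite ↔ Isom R (A i)

/-- The relation `E₀` on Baire space: eventual agreement. -/
def E0 (p q : ℕ → ℕ) : Prop := ∃ m, ∀ n ≥ m, p n = q n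

/-- The relation `E₃` on `ℕ → (ℕ → ℕ)`: columnwise `E₀`. -/
def E3 (p q : ℕ → ℕ → ℕ) : Prop := ∀ m, E0 (p m) (q m)

/-- The relation `E_range` on Baire space: equality of ranges. -/
def Erange (p q : ℕ → ℕ) : Prop := Set.range p = Set.range q

/-- Every co-learnable countable family of pairwise nonisomorphic structures is
nUs-learnable. -/
theorem coLearnable_to_nusLearnable (A : ℕ → Struc)
    (hA : ∀ i j, i ≠ j → ¬ Isom (A i) (A j))
    (h : ∃ M : Struc → ℕ → Option ℕ, IsLearner M ∧ CoLearns A M) :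
    ∃ M : Struc → ℕ → Option ℕ, IsLearner M ∧ NUsLearns A M := by
  classical
  obtain ⟨M, hM, hCo⟩ := h
  -- P R s k : k is a valid conjecture at stage s
  set P : Struc → ℕ → ℕ → Prop :=
    fun R s k => k ≤ s ∧ ∀ t ≤ s, M R t ≠ some k with hP
  set M' : Struc → ℕ → Option ℕ :=
    fun R s => if hex : ∃ k, P R s k then some (Nat.find hex) else none with hM'
  -- key fact: if R ≅ A i, then M never outputs i on R
  have hnever : ∀ R i, Isom R (A i) → ∀ t, M R t ≠ some i := by
    intro R i hIso t ht
    exact ((hCo R i hIso i).mp ⟨t, ht⟩) rfl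
  refine ⟨M', ?_, ?_, ?_⟩
  · -- learner property
    intro R R' s hres
    have hMeq : ∀ t ≤ s, M R t = M R' t := by
      intro t hts
      exact hM R R' t (fun x hx y hy => hres x (hx.trans hts) y (hy.trans hts))
    have hPeq : P R s = P R' s := by
      funext k
      simp only [hP]
      apply propext
      constructor
      · rintro ⟨h1, h2⟩; exact ⟨h1, fun t ht => (hMeq t ht) ▸ h2 t ht⟩
      · rintro ⟨h1, h2⟩; exact ⟨h1, fun t ht => (hMeq t ht) ▸ h2 t ht⟩
    simp only [hM', hPeq]
  · -- Ex-learns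
    intro R i hIso
    have hout : ∀ j, j ≠ i → ∃ s, M R s = some j := fun j hj =>
      (hCo R i hIso j).mpr hj
    set g : ℕ → ℕ := fun j => if hj : j ≠ i then (hout j hj).choose else 0 with hg
    refine ⟨max i ((Finset.range i).sup g), fun s hs => ?_⟩
    have his : i ≤ s := le_trans (le_max_left _ _) hs
    have hex : ∃ k, P R s k := ⟨i, his, fun t _ => hnever R i hIso t⟩
    have hle : Nat.find hex ≤ i := Nat.find_le ⟨his, fun t _ => hnever R i hIso t⟩
    have hge : ¬ Nat.find hex < i := by
      intro hlt
      have hki : Nat.find hex ≠ i := Nat.ne_of_lt hlt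
      have hspec := Nat.find_spec hex
      have hgs : g (Nat.find hex) ≤ s := by
        refine le_trans (le_trans ?_ (le_max_right i _)) hs
        exact Finset.le_sup (Finset.mem_range.mpr hlt)
      have : M R (g (Nat.find hex)) = some (Nat.find hex) := by
        simp only [hg, dif_pos hki]
        exact (hout _ hki).choose_spec
      exact hspec.2 _ hgs this
    have : Nat.find hex = i := le_antisymm hle (not_lt.mp hge)
    simp only [hM', dif_pos hex, this]
  · -- non-U-shaped
    intro R i hIso s hMs t hts
    simp only [hM'] at hMs
    by_cases hex : ∃ k, P R s k
    · rw [dif_pos hex] at hMs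
      have hfi : Nat.find hex = i := Option.some_injective _ hMs
      have hspec := Nat.find_spec hex
      rw [hfi] at hspec
      have hext : ∃ k, P R t k :=
        ⟨i, hspec.1.trans hts, fun u _ => hnever R i hIso u⟩
      have hle : Nat.find hext ≤ i :=
        Nat.find_le ⟨hspec.1.trans hts, fun u _ => hnever R i hIso u⟩
      have hge : ¬ Nat.find hext < i := by
        intro hlt
        have hspec' := Nat.find_spec hext
        have : P R s (Nat.find hext) :=
          ⟨hlt.le.trans hspec.1, fun u hu => hspec'.2 u (hu.trans hts)⟩
        have h2 : Nat.find hex ≤ Nat.find hext := @Nat.find_le (Nat.find hext) _ _ hex this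
        rw [hfi] at h2; omega
      have : Nat.find hext = i := le_antisymm hle (not_lt.mp hge)
      simp only [hM', dif_pos hext, this]
    · rw [dif_neg hex] at hMs
      exact absurd hMs (by simp)
end

section
/- The two-element family {L̃_3, L̃_4}, where L̃_n is the partial order consisting of an n-element chain together with infinitely many elements pairwise incomparable and incomparable to the chain, is nUs-learnable but not co-learnable. -/
/-- `L̃_n`: the `n`-element chain `{0,…,n−1}` (ordered as usual) together with infinitely
many further elements that are pairwise incomparable and incomparable to the chain. -/
def tildeChain (n : ℕ) : Struc := fun x y => decide (x = y ∨ (x ≤ y ∧ y < n))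

/-- The two-element family `{L̃_3, L̃_4}`. -/
def chainFamily : Fin 2 → Struc := fun i => if i = 0 then tildeChain 3 else tildeChain 4


/-- There is a 4-chain among `{0,…,s}` in `R`. -/
def hasChain4 (R : Struc) (s : ℕ) : Prop :=
  ∃ a ≤ s, ∃ b ≤ s, ∃ c ≤ s, ∃ d ≤ s,
    a ≠ b ∧ b ≠ c ∧ c ≠ d ∧ R a b = true ∧ R b c = true ∧ R c d = true

lemma tildeChain_iff {n x y : ℕ} :
    tildeChain n x y = true ↔ (x = y ∨ (x ≤ y ∧ y < n)) := by
  simp [tildeChain]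

lemma hasChain4_mono {R : Struc} {s t : ℕ} (hst : s ≤ t) (h : hasChain4 R s) :
    hasChain4 R t := by
  obtain ⟨a, ha, b, hb, c, hc, d, hd, rest⟩ := h
  exact ⟨a, ha.trans hst, b, hb.trans hst, c, hc.trans hst, d, hd.trans hst, rest⟩

lemma hasChain4_congr {R R' : Struc} {s : ℕ} (h : restrEq R R' s) :
    hasChain4 R s ↔ hasChain4 R' s := by
  constructor
  · rintro ⟨a, ha, b, hb, c, hc, d, hd, h1, h2, h3, r1, r2, r3⟩
    exact ⟨a, ha, b, hb, c, hc, d, hd, h1, h2, h3,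
      (h a ha b hb).symm.trans r1, (h b hb c hc).symm.trans r2, (h c hc d hd).symm.trans r3⟩
  · rintro ⟨a, ha, b, hb, c, hc, d, hd, h1, h2, h3, r1, r2, r3⟩
    exact ⟨a, ha, b, hb, c, hc, d, hd, h1, h2, h3,
      (h a ha b hb).trans r1, (h b hb c hc).trans r2, (h c hc d hd).trans r3⟩

lemma no_chain3 {R : Struc} (h : Isom R (tildeChain 3)) (s : ℕ) : ¬ hasChain4 R s := by
  obtain ⟨e, he⟩ := h
  rintro ⟨a, _, b, _, c, _, d, _, hab, hbc, hcd, r1, r2, r3⟩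
  have step : ∀ x y, x ≠ y → R x y = true → e x < e y ∧ e y < 3 := by
    intro x y hxy hr
    rw [← he, tildeChain_iff] at hr
    rcases hr with h' | ⟨h1, h2⟩
    · exact absurd (e.injective h') hxy
    · exact ⟨lt_of_le_of_ne h1 (fun h' => hxy (e.injective h')), h2⟩
  obtain ⟨h1, h1'⟩ := step a b hab r1
  obtain ⟨h2, h2'⟩ := step b c hbc r2
  obtain ⟨h3, h3'⟩ := step c d hcd r3
  omega

lemma chain4_of_isom {R : Struc} (h : Isom R (tildeChain 4)) :
    ∃ s₀, ∀ s ≥ s₀, hasChain4 R s := by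
  obtain ⟨e, he⟩ := h
  set a := e.symm 0
  set b := e.symm 1
  set c := e.symm 2
  set d := e.symm 3
  refine ⟨max (max a b) (max c d), fun s hs => ?_⟩
  have ha : a ≤ s := le_trans (le_trans (le_max_left _ _) (le_max_left _ _)) hs
  have hb : b ≤ s := le_trans (le_trans (le_max_right _ _) (le_max_left _ _)) hs
  have hc : c ≤ s := le_trans (le_trans (le_max_left _ _) (le_max_right _ _)) hs
  have hd : d ≤ s := le_trans (le_trans (le_max_right _ _) (le_max_right _ _)) hs
  have hr : ∀ u v : ℕ, u = v ∨ (u ≤ v ∧ v < 4) → R (e.symm u) (e.symm v) = true := by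
    intro u v huv
    rw [← he]
    simp only [Equiv.apply_symm_apply, tildeChain_iff]
    exact huv
  have hne : ∀ u v : ℕ, u ≠ v → e.symm u ≠ e.symm v := fun u v h h' =>
    h (e.symm.injective h')
  exact ⟨a, ha, b, hb, c, hc, d, hd, hne 0 1 (by omega), hne 1 2 (by omega),
    hne 2 3 (by omega), hr 0 1 (by omega), hr 1 2 (by omega), hr 2 3 (by omega)⟩

open Classical in
/-- The learner for the family `{L̃_3, L̃_4}`. -/
noncomputable def M4 : Struc → ℕ → Option (Fin 2) :=
  fun R s => if hasChain4 R s then some 1 else some 0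

lemma M4_eq_of_chain {R : Struc} {s : ℕ} (h : hasChain4 R s) : M4 R s = some 1 := by
  simp [M4, h]

lemma M4_eq_of_not_chain {R : Struc} {s : ℕ} (h : ¬ hasChain4 R s) : M4 R s = some 0 := by
  simp [M4, h]

lemma chainFamily_zero : chainFamily 0 = tildeChain 3 := by simp [chainFamily]
lemma chainFamily_one : chainFamily 1 = tildeChain 4 := by
  simp [chainFamily]

lemma M4_learner : IsLearner M4 := by
  intro R R' s h
  by_cases hc : hasChain4 R s
  · rw [M4_eq_of_chain hc, M4_eq_of_chain ((hasChain4_congr h).mp hc)]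
  · rw [M4_eq_of_not_chain hc, M4_eq_of_not_chain (fun h' => hc ((hasChain4_congr h).mpr h'))]

/-- The family `{L̃_3, L̃_4}` is nUs-learnable but not co-learnable. -/
theorem tildeChains_nus_not_co :
    (∃ M : Struc → ℕ → Option (Fin 2), IsLearner M ∧ NUsLearns chainFamily M) ∧
    ¬ ∃ M : Struc → ℕ → Option (Fin 2), IsLearner M ∧ CoLearns chainFamily M := by
  constructor
  · refine ⟨M4, M4_learner, ?_, ?_⟩
    · -- Ex-learning
      intro R i hIso
      fin_cases i <;> simp only [Fin.mk_zero, Fin.mk_one] at hIso ⊢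
      · rw [chainFamily_zero] at hIso
        exact ⟨0, fun s _ => M4_eq_of_not_chain (no_chain3 hIso s)⟩
      · rw [chainFamily_one] at hIso
        obtain ⟨s₀, hs₀⟩ := chain4_of_isom hIso
        exact ⟨s₀, fun s hs => M4_eq_of_chain (hs₀ s hs)⟩
    · -- stability
      intro R i hIso s hMs t hts
      fin_cases i <;> simp only [Fin.mk_zero, Fin.mk_one] at hIso hMs ⊢
      · rw [chainFamily_zero] at hIso
        exact M4_eq_of_not_chain (no_chain3 hIso t)
      · rw [chainFamily_one] at hIso
        have hc : hasChain4 R s := by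
          by_contra hc
          rw [M4_eq_of_not_chain hc] at hMs
          simp at hMs
        exact M4_eq_of_chain (hasChain4_mono hts hc)
  · rintro ⟨M, hL, hCo⟩
    have hIso3 : Isom (tildeChain 3) (chainFamily 0) := by
      rw [chainFamily_zero]; exact ⟨Equiv.refl ℕ, fun x y => rfl⟩
    obtain ⟨s, hs⟩ := (hCo (tildeChain 3) 0 hIso3 1).mpr (by decide)
    set t := max s 3 with ht
    set R' : Struc := fun x y => decide (x = y ∨ (x ≤ y ∧ y < 3) ∨ (x < 3 ∧ y = t + 1))
      with hR'
    have hrestr : restrEq R' (tildeChain 3) s := by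
      intro x hx y hy
      have hyt : y ≤ t := le_trans hy (le_max_left _ _)
      simp only [hR', tildeChain]
      apply decide_eq_decide.mpr
      omega
    have hIso4 : Isom R' (chainFamily 1) := by
      rw [chainFamily_one]
      refine ⟨Equiv.swap 3 (t + 1), fun x y => ?_⟩
      have ht4 : 3 < t + 1 := by omega
      simp only [hR', tildeChain, Equiv.swap_apply_def]
      apply decide_eq_decide.mpr
      split_ifs <;> omega
    have hMR' : M R' s = some 1 := (hL R' (tildeChain 3) s hrestr).trans hs
    have := (hCo R' 1 hIso4 1).mp ⟨s, hMR'⟩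
    exact this rfl
end

section
/- Let P_k (k > 0) be the partial order on {0,…,2k+1} generated by the relations 2i ≤ 2i+2 for i < k and 2i ≤ 2i+1 for i ≤ k, let P_0 be the partial order on ℕ generated by 2i ≤ 2i+2 for all i and 2j ≤ 2j−1 for all j > 0, and let P̃_k be P_k together with infinitely many elements pairwise incomparable and incomparable to P_k (on domain ℕ). The family 𝔓 = {P̃_k : k ∈ ℕ} is Ex-learnable and E_range-learnable, but not nUs-learnable. -/
/-- `P̃_0`: the partial order `P_0` (generated on ℕ by `2i ≤ 2i+2` for all `i` and
`2j ≤ 2j−1` for `j > 0`), realized on the even numbers, together with infinitely many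
incomparable elements (the odd numbers). In `P_0`, `a ≤ b` iff `a = b`, or `a, b` are both
even and `a ≤ b`, or `a` is even, `b` is odd and `a ≤ b + 1`. -/
def tildeP0 : Struc := fun x y =>
  decide (x = y ∨ (x % 2 = 0 ∧ y % 2 = 0 ∧
    (x / 2 = y / 2 ∨
     ((x / 2) % 2 = 0 ∧ (y / 2) % 2 = 0 ∧ x / 2 ≤ y / 2) ∨
     ((x / 2) % 2 = 0 ∧ (y / 2) % 2 = 1 ∧ x / 2 ≤ y / 2 + 1))))

/-- `P̃_k` for `k > 0`: the partial order `P_k` on `{0,…,2k+1}` (generated by `2i ≤ 2i+2`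
for `i < k` and `2i ≤ 2i+1` for `i ≤ k`; its reflexive-transitive closure is
`x ≤ y` iff `x = y` or `x` is even and `x ≤ y ≤ 2k+1`), together with infinitely many
incomparable elements. -/
def tildePk (k : ℕ) : Struc := fun x y =>
  decide (x = y ∨ (x % 2 = 0 ∧ x ≤ y ∧ y ≤ 2 * k + 1))

/-- The family `𝔓 = {P̃_k : k ∈ ℕ}`. -/
def Pfamily : ℕ → Struc
  | 0 => tildeP0
  | k + 1 => tildePk (k + 1)

/-!
A copy of `P̃_k`, `k > 0`, eventually shows a maximal point with a unique strict predecessor (`1`,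
above `0`) and exactly `2k + 2` non-isolated points, whereas a large enough finite part of a copy
of `P̃_0` has no maximal point with a unique strict predecessor. Reading `k` off the count, and
guessing `0` otherwise, Ex-learns the family.

The downward closure of the numbers of non-isolated points of the finite parts `R↾s` is an
isomorphism invariant: `ℕ` for `P̃_0` and `{0, …, 2k + 2}` for `P̃_k`. A continuous map into Baire
space enumerates it, reducing isomorphism on the family to `E_range`.

Every finite part of `P̃_0` extends to a copy of some `P̃_k`, and `P̃_k` embeds into `P̃_0`, so
every finite part of a copy of `P̃_k` extends to a copy of `P̃_0`. A learner that has settled on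
`0` on `P̃_0` is thus led to `k` on a copy of `P̃_k`, and then, on a copy of `P̃_0` sharing that
finite part, it has abandoned its correct conjecture.
-/

lemma tildeP0_eq_true_iff (x y : ℕ) : tildeP0 x y = true ↔ (x = y ∨ (x % 2 = 0 ∧ y % 2 = 0 ∧
    (x / 2 = y / 2 ∨
     ((x / 2) % 2 = 0 ∧ (y / 2) % 2 = 0 ∧ x / 2 ≤ y / 2) ∨
     ((x / 2) % 2 = 0 ∧ (y / 2) % 2 = 1 ∧ x / 2 ≤ y / 2 + 1)))) :=
  decide_eq_true_iff

lemma tildePk_eq_true_iff (k x y : ℕ) :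
    tildePk k x y = true ↔ (x = y ∨ (x % 2 = 0 ∧ x ≤ y ∧ y ≤ 2 * k + 1)) :=
  decide_eq_true_iff

lemma Isom.refl (R : Struc) : Isom R R := ⟨Equiv.refl ℕ, fun _ _ => rfl⟩

lemma Isom.symm {R R' : Struc} (h : Isom R R') : Isom R' R := by
  obtain ⟨e, he⟩ := h
  exact ⟨e.symm, fun x y => by simpa using (he (e.symm x) (e.symm y)).symm⟩

lemma Isom.trans {R R' R'' : Struc} (h : Isom R R') (h' : Isom R' R'') : Isom R R'' := by
  obtain ⟨e, he⟩ := h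
  obtain ⟨f, hf⟩ := h'
  exact ⟨e.trans f, fun x y => by simp [hf, he]⟩

lemma restrEq.symm {R R' : Struc} {s : ℕ} (h : restrEq R R' s) : restrEq R' R s :=
  fun x hx y hy => (h x hx y hy).symm

lemma restrEq.trans {R R' R'' : Struc} {s : ℕ} (h : restrEq R R' s) (h' : restrEq R' R'' s) :
    restrEq R R'' s :=
  fun x hx y hy => (h x hx y hy).trans (h' x hx y hy)

lemma restrEq.mono {R R' : Struc} {s t : ℕ} (h : restrEq R R' t) (hst : s ≤ t) :
    restrEq R R' s :=
  fun x hx y hy => h x (hx.trans hst) y (hy.trans hst)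

lemma exists_equiv_eq_of_injOn_Iic {f : ℕ → ℕ} {s : ℕ} (hf : Set.InjOn f (Set.Iic s)) :
    ∃ e : ℕ ≃ ℕ, ∀ x ≤ s, e x = f x := by
  have hcard : Cardinal.mk (Set.Iic s) < Cardinal.mk ℕ := by
    rw [Cardinal.mk_nat]
    exact (Set.finite_Iic s).lt_aleph0
  obtain ⟨e, he⟩ := Cardinal.extend_function_of_lt ⟨_, hf.injective⟩ hcard ⟨Equiv.refl ℕ⟩
  exact ⟨e, fun x hx => he ⟨x, hx⟩⟩

lemma EmbedsRestr.exists_isom_restrEq {R R' : Struc} {s : ℕ} (h : EmbedsRestr R s R') :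
    ∃ R'', Isom R'' R' ∧ restrEq R R'' s := by
  obtain ⟨f, hinj, hrel⟩ := h
  obtain ⟨e, he⟩ := exists_equiv_eq_of_injOn_Iic fun x hx y hy => hinj x hx y hy
  refine ⟨fun x y => R' (e x) (e y), ⟨e, fun _ _ => rfl⟩, fun x hx y hy => ?_⟩
  simp only [he x hx, he y hy, hrel x hx y hy]

lemma Isom.embedsRestr {R A B : Struc} (hR : Isom R B) {f : ℕ → ℕ} (hf : f.Injective)
    (hrel : ∀ x y, A (f x) (f y) = B x y) (s : ℕ) : EmbedsRestr R s A := by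
  obtain ⟨e, he⟩ := hR
  exact ⟨f ∘ e, fun x _ y _ hxy => e.injective (hf hxy), fun x _ y _ => (hrel _ _).trans (he x y)⟩

theorem not_nUsLearns_of_embeds {I : Type} {A : I → Struc} {M : Struc → ℕ → Option I}
    (hM : IsLearner M) (i : I) (hout : ∀ s, ∃ j ≠ i, EmbedsRestr (A i) s (A j))
    (hin : ∀ j ≠ i, ∃ f : ℕ → ℕ, f.Injective ∧ ∀ x y, A i (f x) (f y) = A j x y) :
    ¬ NUsLearns A M := by
  rintro ⟨hEx, hKeep⟩
  obtain ⟨s, hs⟩ := hEx (A i) i (Isom.refl _)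
  obtain ⟨j, hji, hemb⟩ := hout s
  obtain ⟨R, hRj, hR⟩ := hemb.exists_isom_restrEq
  obtain ⟨t, ht⟩ := hEx R j hRj
  obtain ⟨f, hf, hrel⟩ := hin j hji
  obtain ⟨R', hR'i, hR'⟩ := (hRj.embedsRestr hf hrel (max s t)).exists_isom_restrEq
  have hR's : M R' s = some i :=
    (hM _ _ _ (hR.trans (hR'.mono (le_max_left _ _)))).symm.trans (hs s le_rfl)
  have hR'T : M R' (max s t) = some j := (hM _ _ _ hR').symm.trans (ht _ (le_max_right _ _))
  rw [hKeep R' i hR'i s hR's _ (le_max_left _ _), Option.some_inj] at hR'T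
  exact hji hR'T.symm

/-! In `P_0` the odd point `2j-1` lies above exactly `0, 2, …, 2j`, and in `P_k` the odd point
`2j+1` above exactly `0, 2, …, 2j`. So a finite part of `P_0` sits in `P_k` after shifting its odd
points up by `2`, and `P_k` sits in `P_0` after shifting its even points up by `2`; isolated points
go to isolated points. In `tildeP0` the point `i` of `P_0` is stored at `2i`. -/

def p0ToPk (k x : ℕ) : ℕ :=
  if x % 2 = 1 then 2 * k + 1 + x else if x / 2 % 2 = 0 then x / 2 else x / 2 + 2

def pkToP0 (k z : ℕ) : ℕ :=
  if z ≤ 2 * k + 1 then (if z % 2 = 0 then 2 * z + 4 else 2 * z) else 2 * z + 1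

lemma embedsRestr_tildeP0_tildePk (s : ℕ) : EmbedsRestr tildeP0 s (tildePk (s + 1)) := by
  refine ⟨p0ToPk (s + 1), fun x _ y _ h => ?_, fun x hx y hy => ?_⟩
  · unfold p0ToPk at h
    split_ifs at h <;> omega
  · rw [Bool.eq_iff_iff, tildePk_eq_true_iff, tildeP0_eq_true_iff]
    unfold p0ToPk
    split_ifs <;> omega

lemma pkToP0_injective (k : ℕ) : (pkToP0 k).Injective := by
  intro x y h
  unfold pkToP0 at h
  split_ifs at h <;> omega

lemma tildeP0_pkToP0 (k x y : ℕ) : tildeP0 (pkToP0 k x) (pkToP0 k y) = tildePk k x y := by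
  rw [Bool.eq_iff_iff, tildePk_eq_true_iff, tildeP0_eq_true_iff]
  unfold pkToP0
  split_ifs <;> omega

theorem Pfamily_not_nUsLearns {M : Struc → ℕ → Option ℕ} (hM : IsLearner M) :
    ¬ NUsLearns Pfamily M := by
  refine not_nUsLearns_of_embeds hM 0
    (fun s => ⟨s + 1, s.succ_ne_zero, embedsRestr_tildeP0_tildePk s⟩) fun j hj => ?_
  obtain ⟨k, rfl⟩ := Nat.exists_eq_succ_of_ne_zero hj
  exact ⟨pkToP0 (k + 1), pkToP0_injective _, tildeP0_pkToP0 _⟩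

open Finset

def nonIsolated (R : Struc) (s : ℕ) : Finset ℕ :=
  (range (s + 1)).filter fun x => ∃ y ≤ s, y ≠ x ∧ (R x y = true ∨ R y x = true)

lemma mem_nonIsolated {R : Struc} {s x : ℕ} :
    x ∈ nonIsolated R s ↔ x ≤ s ∧ ∃ y ≤ s, y ≠ x ∧ (R x y = true ∨ R y x = true) := by
  simp [nonIsolated]

lemma nonIsolated_congr {R R' : Struc} {s : ℕ} (h : restrEq R R' s) :
    nonIsolated R s = nonIsolated R' s := by
  ext x
  simp only [mem_nonIsolated]
  constructor <;> rintro ⟨hx, y, hy, hyx, hxy⟩ <;> refine ⟨hx, y, hy, hyx, ?_⟩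
  · rwa [← h x hx y hy, ← h y hy x hx]
  · rwa [h x hx y hy, h y hy x hx]

lemma card_nonIsolated_le_of_hom {R A : Struc} {s t : ℕ} {f : ℕ → ℕ} (hf : f.Injective)
    (hrel : ∀ x y, R x y = true → A (f x) (f y) = true)
    (hbound : ∀ x ≤ s, ∀ y ≤ s, x ≠ y → R x y = true → f x ≤ t ∧ f y ≤ t) :
    #(nonIsolated R s) ≤ #(nonIsolated A t) := by
  refine card_le_card_of_injOn f (fun x hx => ?_) hf.injOn
  simp only [mem_coe, mem_nonIsolated] at hx ⊢
  obtain ⟨hx, y, hy, hyx, hxy | hyx'⟩ := hx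
  · obtain ⟨hfx, hfy⟩ := hbound x hx y hy hyx.symm hxy
    exact ⟨hfx, f y, hfy, hf.ne hyx, Or.inl (hrel _ _ hxy)⟩
  · obtain ⟨hfy, hfx⟩ := hbound y hy x hx hyx hyx'
    exact ⟨hfx, f y, hfy, hf.ne hyx, Or.inr (hrel _ _ hyx')⟩

lemma nonIsolated_tildePk_subset (k s : ℕ) : nonIsolated (tildePk k) s ⊆ range (2 * k + 2) := by
  intro x hx
  simp only [mem_nonIsolated, tildePk_eq_true_iff] at hx
  rw [mem_range]
  omega

lemma nonIsolated_tildePk {k s : ℕ} (hs : 2 * k + 1 ≤ s) :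
    nonIsolated (tildePk k) s = range (2 * k + 2) := by
  refine (nonIsolated_tildePk_subset k s).antisymm fun x hx => ?_
  rw [mem_range] at hx
  rw [mem_nonIsolated]
  refine ⟨by omega, if x % 2 = 0 then x + 1 else x - 1, by split_ifs <;> omega,
    by split_ifs <;> omega, ?_⟩
  rw [tildePk_eq_true_iff, tildePk_eq_true_iff]
  split_ifs <;> omega

lemma le_card_nonIsolated_tildeP0 (m : ℕ) : m ≤ #(nonIsolated tildeP0 (2 * m)) := by
  have hsub : (range m).image (fun b => 2 * b + 2) ⊆ nonIsolated tildeP0 (2 * m) := by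
    intro x hx
    simp only [mem_image, mem_range] at hx
    obtain ⟨b, hb, rfl⟩ := hx
    exact mem_nonIsolated.2 ⟨by omega, 0, by omega, by omega,
      Or.inr ((tildeP0_eq_true_iff _ _).2 (by omega))⟩
  calc m = #((range m).image (fun b => 2 * b + 2)) := by
        rw [card_image_of_injective _ (fun a b h => by omega), card_range]
    _ ≤ _ := card_le_card hsub

def HasMaximalWithUniquePred (R : Struc) (s : ℕ) : Prop :=
  ∃ x ≤ s, (∃ y ≤ s, y ≠ x ∧ R y x = true ∧ ∀ z ≤ s, z ≠ x → R z x = true → z = y) ∧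
    ∀ y ≤ s, y ≠ x → R x y = false

lemma HasMaximalWithUniquePred.of_restrEq {R R' : Struc} {s : ℕ} (h : restrEq R R' s)
    (hR : HasMaximalWithUniquePred R s) : HasMaximalWithUniquePred R' s := by
  obtain ⟨x, hx, ⟨y, hy, hyx, hyxR, huniq⟩, hmax⟩ := hR
  exact ⟨x, hx, ⟨y, hy, hyx, (h y hy x hx).symm.trans hyxR,
      fun z hz hzx hzxR => huniq z hz hzx ((h z hz x hx).trans hzxR)⟩,
    fun y hy hyx => (h x hx y hy).symm.trans (hmax y hy hyx)⟩

lemma hasMaximalWithUniquePred_congr {R R' : Struc} {s : ℕ} (h : restrEq R R' s) :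
    HasMaximalWithUniquePred R s ↔ HasMaximalWithUniquePred R' s :=
  ⟨.of_restrEq h, .of_restrEq h.symm⟩

/-- In `tildeP0` the point `0` and the odd points have no strict predecessor, `4` lies below `2`,
and every other point has the two strict predecessors `0` and `4`. -/
lemma not_hasMaximalWithUniquePred_of_tildeP0 (e : ℕ ≃ ℕ) {s : ℕ} (hs : ∀ m ≤ 4, e.symm m ≤ s) :
    ¬ HasMaximalWithUniquePred (fun x y => tildeP0 (e x) (e y)) s := by
  rintro ⟨x, -, ⟨y, -, hyx, hyxR, huniq⟩, hmax⟩
  have hne : ∀ m, e x ≠ m → e.symm m ≠ x := fun m h h' => h (by rw [← h', e.apply_symm_apply])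
  by_cases h4 : e x = 4
  · have h42 : tildeP0 4 2 = false := by
      simpa [h4] using hmax (e.symm 2) (hs 2 (by omega)) (hne 2 (by omega))
    exact absurd h42 (by decide)
  · simp only [tildeP0_eq_true_iff] at hyxR huniq
    have hey : e y ≠ e x := e.injective.ne hyx
    have h0 := huniq (e.symm 0) (hs 0 (by omega)) (hne 0 (by omega))
    have h4' := huniq (e.symm 4) (hs 4 (by omega)) (hne 4 h4)
    rw [Equiv.apply_symm_apply] at h0 h4'
    have := e.symm.injective ((h0 (by omega)).trans (h4' (by omega)).symm)
    omega

lemma hasMaximalWithUniquePred_of_tildePk (k : ℕ) (e : ℕ ≃ ℕ) {s : ℕ}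
    (hs : ∀ m ≤ 1, e.symm m ≤ s) :
    HasMaximalWithUniquePred (fun x y => tildePk k (e x) (e y)) s := by
  refine ⟨e.symm 1, hs 1 le_rfl, ⟨e.symm 0, hs 0 zero_le_one, by simp, ?_, fun z _ hz h => ?_⟩,
    fun y _ hy => ?_⟩
  · simp [tildePk_eq_true_iff]
  · simp only [Equiv.apply_symm_apply, tildePk_eq_true_iff] at h
    rw [e.eq_symm_apply]
    have : e z ≠ 1 := fun h' => hz (by rw [← h', e.symm_apply_apply])
    omega
  · simp only [Equiv.apply_symm_apply, Bool.eq_false_iff, ne_eq, tildePk_eq_true_iff]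
    have : e y ≠ 1 := fun h' => hy (by rw [← h', e.symm_apply_apply])
    omega

lemma card_nonIsolated_of_tildePk (k : ℕ) (e : ℕ ≃ ℕ) {s : ℕ}
    (hs : ∀ m ≤ 2 * k + 1, e.symm m ≤ s) :
    #(nonIsolated (fun x y => tildePk k (e x) (e y)) s) = 2 * k + 2 := by
  have hcard : #(nonIsolated (tildePk k) (2 * k + 1)) = 2 * k + 2 := by
    rw [nonIsolated_tildePk le_rfl, card_range]
  refine le_antisymm (hcard ▸ card_nonIsolated_le_of_hom e.injective (fun _ _ h => h) ?_)
    (hcard ▸ card_nonIsolated_le_of_hom e.symm.injective (by simp) ?_)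
  · intro x _ y _ hxy h
    simp only [tildePk_eq_true_iff, e.injective.eq_iff, hxy, false_or] at h
    omega
  · intro x _ y _ hxy h
    rw [tildePk_eq_true_iff] at h
    exact ⟨hs x (by omega), hs y (by omega)⟩

open Classical in
noncomputable def pfamilyLearner (R : Struc) (s : ℕ) : Option ℕ :=
  some (if HasMaximalWithUniquePred R s then #(nonIsolated R s) / 2 - 1 else 0)

lemma pfamilyLearner_isLearner : IsLearner pfamilyLearner := by
  intro R R' s h
  rw [pfamilyLearner, pfamilyLearner, propext (hasMaximalWithUniquePred_congr h),
    nonIsolated_congr h]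

lemma pfamilyLearner_exLearns : ExLearns Pfamily pfamilyLearner := by
  rintro R i ⟨e, he⟩
  cases i with
  | zero =>
    obtain rfl : (fun x y => tildeP0 (e x) (e y)) = R := funext₂ he
    obtain ⟨s₀, hs₀⟩ := ((Set.finite_Iic 4).image e.symm).bddAbove
    refine ⟨s₀, fun s hs => ?_⟩
    rw [pfamilyLearner, if_neg (not_hasMaximalWithUniquePred_of_tildeP0 e
      fun m hm => (hs₀ ⟨m, hm, rfl⟩).trans hs)]
  | succ k =>
    obtain rfl : (fun x y => tildePk (k + 1) (e x) (e y)) = R := funext₂ he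
    obtain ⟨s₀, hs₀⟩ := ((Set.finite_Iic (2 * (k + 1) + 1)).image e.symm).bddAbove
    refine ⟨s₀, fun s hs => ?_⟩
    have hs' : ∀ m ≤ 2 * (k + 1) + 1, e.symm m ≤ s := fun m hm => (hs₀ ⟨m, hm, rfl⟩).trans hs
    rw [pfamilyLearner, if_pos (hasMaximalWithUniquePred_of_tildePk _ e
      fun m hm => hs' m (by omega)), card_nonIsolated_of_tildePk _ e hs']
    exact congrArg some (by omega)

lemma continuous_of_restrEq {α : Type*} [TopologicalSpace α] {F : Struc → α} (s : ℕ)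
    (hF : ∀ R R', restrEq R R' s → F R = F R') : Continuous F := by
  let ρ : Struc → Fin (s + 1) → Fin (s + 1) → Bool := fun R x y => R x y
  have hρ : Continuous ρ := by fun_prop
  refine IsLocallyConstant.continuous (IsLocallyConstant.iff_exists_open F |>.2 fun R => ?_)
  refine ⟨ρ ⁻¹' {ρ R}, hρ.isOpen_preimage _ (isOpen_discrete _), rfl, fun R' hR' => ?_⟩
  refine (hF R R' fun x hx y hy => ?_).symm
  exact (congrFun (congrFun hR' ⟨x, Nat.lt_succ_of_le hx⟩) ⟨y, Nat.lt_succ_of_le hy⟩).symm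

def boundedByCount (R : Struc) : Set ℕ := {m | ∃ s, m ≤ #(nonIsolated R s)}

/-- Cutting the counts off at `n.unpair.2` makes the range the downward closure of all counts,
which, unlike the sequence of counts itself, does not depend on the presentation. -/
def boundedByCountEnum (R : Struc) (n : ℕ) : ℕ := min #(nonIsolated R n.unpair.1) n.unpair.2

lemma range_boundedByCountEnum (R : Struc) :
    Set.range (boundedByCountEnum R) = boundedByCount R := by
  ext m
  constructor
  · rintro ⟨n, rfl⟩
    exact ⟨n.unpair.1, min_le_left _ _⟩
  · rintro ⟨s, hm⟩
    exact ⟨Nat.pair s m, by simp [boundedByCountEnum, hm]⟩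

lemma continuous_boundedByCountEnum : Continuous boundedByCountEnum :=
  continuous_pi fun n => continuous_of_restrEq n.unpair.1 fun R R' h => by
    simp only [boundedByCountEnum, nonIsolated_congr h]

lemma boundedByCount_subset_of_isom {R R' : Struc} (h : Isom R R') :
    boundedByCount R ⊆ boundedByCount R' := by
  obtain ⟨e, he⟩ := h
  rintro m ⟨s, hm⟩
  obtain ⟨t, ht⟩ := ((Set.finite_Iic s).image e).bddAbove
  exact ⟨t, hm.trans (card_nonIsolated_le_of_hom e.injective (fun x y h => (he x y).trans h)
    fun x hx y hy _ _ => ⟨ht ⟨x, hx, rfl⟩, ht ⟨y, hy, rfl⟩⟩)⟩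

lemma boundedByCount_eq_of_isom {R R' : Struc} (h : Isom R R') :
    boundedByCount R = boundedByCount R' :=
  (boundedByCount_subset_of_isom h).antisymm (boundedByCount_subset_of_isom h.symm)

lemma boundedByCount_tildeP0 : boundedByCount tildeP0 = Set.univ :=
  Set.eq_univ_of_forall fun m => ⟨2 * m, le_card_nonIsolated_tildeP0 m⟩

lemma boundedByCount_tildePk (k : ℕ) : boundedByCount (tildePk k) = Set.Iic (2 * k + 2) := by
  ext m
  constructor
  · rintro ⟨s, hm⟩
    exact hm.trans ((card_le_card (nonIsolated_tildePk_subset k s)).trans (card_range _).le)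
  · intro hm
    exact ⟨2 * k + 1, by rwa [nonIsolated_tildePk le_rfl, card_range]⟩

lemma boundedByCount_Pfamily_injective : (fun i => boundedByCount (Pfamily i)).Injective := by
  have hP : ∀ k, boundedByCount (Pfamily (k + 1)) = Set.Iic (2 * (k + 1) + 2) :=
    fun k => boundedByCount_tildePk (k + 1)
  have hne : ∀ k, boundedByCount (Pfamily (k + 1)) ≠ boundedByCount (Pfamily 0) := fun k h => by
    rw [hP, show Pfamily 0 = tildeP0 from rfl, boundedByCount_tildeP0] at h
    exact Set.notMem_Iic.2 (Nat.lt_succ_self _) (h ▸ Set.mem_univ (2 * (k + 1) + 3))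
  rintro (_ | i) (_ | j) h
  · rfl
  · exact absurd h.symm (hne j)
  · exact absurd h (hne i)
  · simp only [hP, Set.Iic_inj] at h
    omega

theorem Pfamily_erange_learnable :
    ∃ Γ : Struc → (ℕ → ℕ), ContinuousOn Γ (LD Pfamily) ∧
      ∀ R ∈ LD Pfamily, ∀ R' ∈ LD Pfamily, (Isom R R' ↔ Erange (Γ R) (Γ R')) := by
  refine ⟨boundedByCountEnum, continuous_boundedByCountEnum.continuousOn, ?_⟩
  rintro R ⟨i, hi⟩ R' ⟨j, hj⟩
  rw [Erange, range_boundedByCountEnum, range_boundedByCountEnum]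
  refine ⟨boundedByCount_eq_of_isom, fun h => ?_⟩
  obtain rfl : i = j := boundedByCount_Pfamily_injective
    ((boundedByCount_eq_of_isom hi).symm.trans (h.trans (boundedByCount_eq_of_isom hj)))
  exact hi.trans hj.symm

/-- The family `𝔓` is Ex-learnable and `E_range`-learnable, but not nUs-learnable. -/
theorem Pfamily_ex_erange_not_nus :
    (∃ M : Struc → ℕ → Option ℕ, IsLearner M ∧ ExLearns Pfamily M) ∧
    (∃ Γ : Struc → (ℕ → ℕ), ContinuousOn Γ (LD Pfamily) ∧
        ∀ R ∈ LD Pfamily, ∀ R' ∈ LD Pfamily, (Isom R R' ↔ Erange (Γ R) (Γ R'))) ∧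
    ¬ ∃ M : Struc → ℕ → Option ℕ, IsLearner M ∧ NUsLearns Pfamily M :=
  ⟨⟨pfamilyLearner, pfamilyLearner_isLearner, pfamilyLearner_exLearns⟩,
    Pfamily_erange_learnable, fun ⟨_, hM, hnus⟩ => Pfamily_not_nUsLearns hM hnus⟩
end
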